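/- arXiv:math/0309102 — 3 statements merged into one kernel-verified Lean document; each statement's English description precedes it below -/
import Mathlib

section
/- Let d, n ∈ ℕ and let Δ_c be the simplicial complex on A_{d,n} = {x ∈ ℕ^{n+1} : Σx_i = d} with faces F such that Σ_{a∈F} a ≤ c coordinatewise. If c ∈ ℕ^{n+1} satisfies Σ_i c_i ≥ 3d, then Δ_c is connected (its reduced 0-th homology vanishes): for any two vertices v, w ∈ Δ_c there exists u ∈ A_{d,n} with {u,v} and {u,w} faces of Δ_c. -/
open Finset

/-- `A_{d,n}`: the exponent vectors of the degree-`d` monomials in `n+1` variables,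
i.e. `{x ∈ ℕ^{n+1} : Σ_i x_i = d}`. -/
def Adn (d n : ℕ) : Set (Fin (n + 1) → ℕ) :=
  {x | ∑ i, x i = d}

/-- `F` is a face of the simplicial complex `Δ_v` on the vertex set `A_{d,n}`:
all vertices of `F` lie in `A_{d,n}` and the coordinatewise sum of the vertices of `F`
is at most `v`. -/
def IsFace (d n : ℕ) (v : Fin (n + 1) → ℕ) (F : Finset (Fin (n + 1) → ℕ)) : Prop :=
  ↑F ⊆ Adn d n ∧ ∀ i, ∑ a ∈ F, a i ≤ v i

/-- (Ordered) simplicial `k`-chains with complex coefficients on the vertex set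
`ℕ^{n+1} ⊇ A_{d,n}`: formal `ℂ`-linear combinations of `(k+1)`-tuples of vertices. -/
abbrev PChain (n k : ℕ) : Type :=
  (Fin (k + 1) → (Fin (n + 1) → ℕ)) →₀ ℂ

/-- The simplicial boundary operator on ordered chains. -/
noncomputable def bdry {n k : ℕ} (c : PChain n (k + 1)) : PChain n k :=
  c.sum fun σ a =>
    ∑ i : Fin (k + 2), ((-1 : ℂ) ^ (i : ℕ) * a) • Finsupp.single (σ ∘ i.succAbove) 1

/-- The augmentation (sum of coefficients) of a chain. -/
noncomputable def aug {n k : ℕ} (c : PChain n k) : ℂ :=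
  c.sum fun _ a => a

/-- (Reduced) cycles: in positive degree, chains with vanishing boundary; in degree `0`,
chains with vanishing augmentation. -/
def IsCycle {n : ℕ} : ∀ {k : ℕ}, PChain n k → Prop
  | 0, c => aug c = 0
  | _ + 1, c => bdry c = 0

/-- The chain `c` is supported on the simplicial complex `Δ_v`. -/
def ChainIn (d n : ℕ) (v : Fin (n + 1) → ℕ) {k : ℕ} (c : PChain n k) : Prop :=
  ∀ σ ∈ c.support, IsFace d n v (Finset.image σ Finset.univ)

/-- Vanishing of the `k`-th reduced (simplicial) homology of `Δ_v` with `ℂ`-coefficients: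
every supported `k`-cycle is the boundary of a supported `(k+1)`-chain. -/
def Hvanish (d n k : ℕ) (v : Fin (n + 1) → ℕ) : Prop :=
  ∀ c : PChain n k, ChainIn d n v c → IsCycle c →
    ∃ η : PChain n (k + 1), ChainIn d n v η ∧ bdry η = c

/-- The `r`-th standard basis vector `e_r` of `ℕ^m`. -/
def ee {m : ℕ} (r : Fin m) : Fin m → ℕ := fun i => if i = r then 1 else 0

/-- Join of a chain with a vertex: `a ∗ c`. -/
noncomputable def vjoin {n k : ℕ} (a : Fin (n + 1) → ℕ) (c : PChain n k) :
    PChain n (k + 1) :=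
  c.sum fun τ b => b • Finsupp.single (Fin.cons a τ) 1

/-- Join of two chains, `c₁ ∗ c₂` (with the appropriate sign conventions). -/
noncomputable def joinChain {n s t : ℕ} (c₁ : PChain n s) (c₂ : PChain n t) :
    PChain n (s + t + 1) :=
  ((-1 : ℂ) ^ (s * (s + 1) / 2)) •
    c₁.sum fun σ a => c₂.sum fun τ b =>
      (a * b) • Finsupp.single
        (fun i : Fin (s + t + 1 + 1) =>
          Fin.append σ τ (Fin.cast (show s + t + 1 + 1 = (s + 1) + (t + 1) by omega) i)) 1

/-- Reindexing of chains along an equality of dimensions. -/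
noncomputable def castChain {n k k' : ℕ} (h : k = k') (c : PChain n k) : PChain n k' :=
  Finsupp.mapDomain (fun σ => σ ∘ Fin.cast (show k' + 1 = k + 1 by omega)) c

/-- The chain `c` is supported on the union complex
`X_b = Δ_b ∪ Δ_{b−e₁+e₂} ∪ ⋯ ∪ Δ_{b−b₁e₁+b₁e₂}` (coordinates `e₁, e₂` are the
first two coordinates, i.e. indices `0, 1`). -/
def ChainInX (d n : ℕ) (b : Fin (n + 1) → ℕ) {k : ℕ} (c : PChain n k) : Prop :=
  ∀ σ ∈ c.support, ∃ j ≤ b 0,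
    IsFace d n (fun i => if i = 0 then b 0 - j else if i = 1 then b 1 + j else b i)
      (Finset.image σ Finset.univ)

lemma exists_le_sum {N : ℕ} (m : Fin N → ℕ) (d : ℕ) (h : d ≤ ∑ i, m i) :
    ∃ u : Fin N → ℕ, (∀ i, u i ≤ m i) ∧ ∑ i, u i = d := by
  induction d with
  | zero => exact ⟨fun _ => 0, fun i => Nat.zero_le _, by simp⟩
  | succ d ih =>
    obtain ⟨u, hu, hsum⟩ := ih (Nat.le_of_succ_le h)
    have hlt : ∑ i, u i < ∑ i, m i := by omega
    have : ∃ i, u i < m i := by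
      by_contra hcon
      push_neg at hcon
      exact absurd (Finset.sum_le_sum fun i _ => hcon i) (not_le.mpr hlt)
    obtain ⟨i, hi⟩ := this
    refine ⟨Function.update u i (u i + 1), ?_, ?_⟩
    · intro j
      rcases eq_or_ne j i with rfl | hj
      · simp; omega
      · simp [Function.update_of_ne hj, hu j]
    · have h1 : ∑ j, Function.update u i (u i + 1) j
          = u i + 1 + ∑ j ∈ Finset.univ.erase i, u j := by
        rw [Finset.sum_update_of_mem (Finset.mem_univ i), Finset.sdiff_singleton_eq_erase]
      have h2 : ∑ j, u j = u i + ∑ j ∈ Finset.univ.erase i, u j :=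
        (Finset.add_sum_erase _ u (Finset.mem_univ i)).symm
      omega

/-- If `c ∈ ℕ^{n+1}` satisfies `Σᵢ cᵢ ≥ 3d`, then `Δ_c` is connected:
for any two vertices `v, w` of `Δ_c` there is `u ∈ A_{d,n}` with `{u, v}` and `{u, w}`
faces of `Δ_c`. -/
theorem stmt6 (d n : ℕ) (c : Fin (n + 1) → ℕ) (hc : 3 * d ≤ ∑ i, c i)
    (v w : Fin (n + 1) → ℕ) (hv : IsFace d n c {v}) (hw : IsFace d n c {w}) :
    ∃ u ∈ Adn d n, IsFace d n c {u, v} ∧ IsFace d n c {u, w} := by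
  obtain ⟨hvA, hvle⟩ := hv
  obtain ⟨hwA, hwle⟩ := hw
  have hvAdn : v ∈ Adn d n := hvA (by simp)
  have hwAdn : w ∈ Adn d n := hwA (by simp)
  have hvd : ∑ i, v i = d := hvAdn
  have hwd : ∑ i, w i = d := hwAdn
  have hvle' : ∀ i, v i ≤ c i := fun i => by simpa using hvle i
  have hwle' : ∀ i, w i ≤ c i := fun i => by simpa using hwle i
  set m : Fin (n + 1) → ℕ := fun i => c i - max (v i) (w i) with hm
  have hmsum : ∑ i, m i + ∑ i, max (v i) (w i) = ∑ i, c i := by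
    rw [← Finset.sum_add_distrib]
    apply Finset.sum_congr rfl
    intro i _
    have : max (v i) (w i) ≤ c i := max_le (hvle' i) (hwle' i)
    simp [hm]; omega
  have hmaxle : ∑ i, max (v i) (w i) ≤ 2 * d := by
    calc ∑ i, max (v i) (w i) ≤ ∑ i, (v i + w i) :=
          Finset.sum_le_sum fun i _ => max_le_add_of_nonneg (Nat.zero_le _) (Nat.zero_le _)
      _ = 2 * d := by rw [Finset.sum_add_distrib, hvd, hwd]; ring
  have hd : d ≤ ∑ i, m i := by omega
  obtain ⟨u, hu, husum⟩ := exists_le_sum m d hd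
  have huA : u ∈ Adn d n := husum
  have key : ∀ i, u i + max (v i) (w i) ≤ c i := by
    intro i
    have := hu i
    have : max (v i) (w i) ≤ c i := max_le (hvle' i) (hwle' i)
    simp [hm] at hu
    have := hu i
    omega
  refine ⟨u, huA, ⟨?_, ?_⟩, ⟨?_, ?_⟩⟩
  · intro x hx
    simp at hx
    rcases hx with rfl | rfl
    exacts [huA, hvAdn]
  · intro i
    calc ∑ a ∈ ({u, v} : Finset _), a i ≤ u i + v i := by
          rcases eq_or_ne u v with rfl | h
          · simp
          · rw [Finset.sum_pair h]
      _ ≤ c i := le_trans (by have := key i; have : v i ≤ max (v i) (w i) := le_max_left _ _; omega) le_rfl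
  · intro x hx
    simp at hx
    rcases hx with rfl | rfl
    exacts [huA, hwAdn]
  · intro i
    calc ∑ a ∈ ({u, w} : Finset _), a i ≤ u i + w i := by
          rcases eq_or_ne u w with rfl | h
          · simp
          · rw [Finset.sum_pair h]
      _ ≤ c i := le_trans (by have := key i; have : w i ≤ max (v i) (w i) := le_max_right _ _; omega) le_rfl
end

section
/- Let d ≥ 2 and g ∈ ℕ^{n+1} be a sum of at least 4 elements of A_{d,n} = {x ∈ ℕ^{n+1} : Σx_i = d}. Then for every v ∈ ℕ^{n+1}, the first reduced simplicial homology of Δ_{g+v} (with ℂ coefficients) vanishes, where Δ_w is the complex on A_{d,n} with faces F satisfying Σ_{a∈F} a ≤ w coordinatewise. -/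
open Finset

/-!
Write `|w| = ∑ i, w i`. Here `|g + v| ≥ 4d`, and whenever `|w| ≥ 4d` the complex `Δ_w` has room
to spare: if `X ≤ w` and `|X| + d ≤ |w|`, some vertex `q` has `q + X ≤ w`. Fix a vertex `p` and,
for each vertex `x`, a vertex `u x` with `u x + (p ⊔ x) ≤ w`. Modulo boundaries every edge `xy` is
then homologous to the path `p → u y → y` minus the path `p → u x → x`, because a vertex `t` with
`t + ((x + y) ⊔ p) ≤ w` splits the pentagon into the triangle `xyt` and two squares. A square
`a b c e` is a cone over a vertex `q` with `q + (a ⊔ c) + (b ⊔ e) ≤ w` as soon as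
`|a ⊓ c| + |b ⊓ e| ≥ d`. In general, if `|b ⊓ e| ≤ |a ⊓ c|`, replacing `b` by a vertex that
contains `e - b` reaches that case at the cost of two triangles (symmetrically for `c`). Hence a
cycle, whose boundary is zero, is a boundary.
-/

section NatVectors

variable {ι : Type*} [Fintype ι]

theorem exists_le_le_sum_eq [DecidableEq ι] {lo hi : ι → ℕ} (hle : lo ≤ hi) {k : ℕ}
    (hlo : ∑ i, lo i ≤ k) (hhi : k ≤ ∑ i, hi i) :
    ∃ z, lo ≤ z ∧ z ≤ hi ∧ ∑ i, z i = k := by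
  induction k, hlo using Nat.le_induction with
  | base => exact ⟨lo, le_rfl, hle, rfl⟩
  | succ k _ ih =>
    obtain ⟨z, hlz, hzh, hz⟩ := ih (by omega)
    obtain ⟨i, hi⟩ : ∃ i, z i < hi i := by
      by_contra! h
      have := Finset.sum_le_sum fun i (_ : i ∈ univ) => h i
      omega
    refine ⟨z + Pi.single i 1, fun j => ?_, fun j => ?_, ?_⟩
    · exact (hlz j).trans le_self_add
    · rcases eq_or_ne j i with rfl | hj
      · simpa using hi
      · simpa [hj] using hzh j
    · simp [Finset.sum_add_distrib, hz]

theorem sum_sup_add_sum_inf (x y : ι → ℕ) :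
    ∑ i, (x ⊔ y) i + ∑ i, (x ⊓ y) i = ∑ i, x i + ∑ i, y i := by
  simp only [← Finset.sum_add_distrib, Pi.sup_apply, Pi.inf_apply, max_add_min]

theorem sum_tsub_add_sum_inf (x y : ι → ℕ) :
    ∑ i, (x - y) i + ∑ i, (y ⊓ x) i = ∑ i, x i := by
  simp only [← Finset.sum_add_distrib, Pi.sub_apply, Pi.inf_apply]
  exact Finset.sum_congr rfl fun i _ => by omega

end NatVectors

section Adn

variable {d n : ℕ}

theorem mem_Adn {x : Fin (n + 1) → ℕ} : x ∈ Adn d n ↔ ∑ i, x i = d := Iff.rfl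

theorem exists_mem_Adn_between {lo X w : Fin (n + 1) → ℕ} (h : lo + X ≤ w)
    (hlo : ∑ i, lo i ≤ d) (hX : ∑ i, X i + d ≤ ∑ i, w i) :
    ∃ z ∈ Adn d n, lo ≤ z ∧ z + X ≤ w := by
  have hXw : X ≤ w := le_add_self.trans h
  have hroom : ∑ i, (w - X) i = ∑ i, w i - ∑ i, X i :=
    Finset.sum_tsub_distrib _ fun i _ => hXw i
  obtain ⟨z, hlz, hzw, hz⟩ :=
    exists_le_le_sum_eq (le_tsub_of_add_le_right h) hlo (hi := w - X) (by omega)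
  exact ⟨z, hz, hlz, (le_tsub_iff_right hXw).1 hzw⟩

theorem exists_mem_Adn_add_le {X w : Fin (n + 1) → ℕ} (hXw : X ≤ w)
    (hX : ∑ i, X i + d ≤ ∑ i, w i) : ∃ z ∈ Adn d n, z + X ≤ w := by
  obtain ⟨z, hz, -, hzX⟩ := exists_mem_Adn_between (lo := 0) (by simpa using hXw) (by simp) hX
  exact ⟨z, hz, hzX⟩

theorem sum_multiset_sum_of_forall_mem_Adn {s : Multiset (Fin (n + 1) → ℕ)}
    (hs : ∀ a ∈ s, a ∈ Adn d n) : ∑ i, s.sum i = Multiset.card s * d := by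
  have := map_multiset_sum (∑ i, Pi.evalAddMonoidHom (fun _ => ℕ) i) s
  simp only [AddMonoidHom.finsetSum_apply, Pi.evalAddMonoidHom_apply] at this
  rw [this, Multiset.map_congr rfl hs, Multiset.map_const', Multiset.sum_replicate, smul_eq_mul]

end Adn

section Faces

variable {d n : ℕ} {w : Fin (n + 1) → ℕ}

theorem isFace_image_of_sum_le {k : ℕ} {σ : Fin (k + 1) → Fin (n + 1) → ℕ}
    (hσ : ∀ j, σ j ∈ Adn d n) (hw : ∑ j, σ j ≤ w) : IsFace d n w (univ.image σ) := by
  refine ⟨by simpa [Set.subset_def] using hσ, fun i => ?_⟩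
  have := (Finset.sum_image_le_of_nonneg (s := univ) (g := σ) (f := id)
    fun u _ => zero_le).trans hw
  simpa using this i

theorem IsFace.mem_Adn {k : ℕ} {σ : Fin (k + 1) → Fin (n + 1) → ℕ}
    (h : IsFace d n w (univ.image σ)) (j : Fin (k + 1)) : σ j ∈ Adn d n :=
  h.1 (by simp)

theorem IsFace.add_le_of_ne {x y : Fin (n + 1) → ℕ} (h : IsFace d n w (univ.image ![x, y]))
    (hxy : x ≠ y) : x + y ≤ w := by
  have himage : univ.image ![x, y] = {x, y} := by ext; simp [Fin.exists_fin_two, eq_comm]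
  intro i
  simpa [himage, Finset.sum_pair hxy] using h.2 i

end Faces

section Chains

variable {n : ℕ}

noncomputable def edg (a b : Fin (n + 1) → ℕ) : PChain n 1 := Finsupp.single ![a, b] 1

theorem vecCons_eta_fin_two {α : Type*} (σ : Fin 2 → α) : ![σ 0, σ 1] = σ := by
  ext j
  fin_cases j <;> rfl

theorem bdry_single {k : ℕ} (σ : Fin (k + 2) → Fin (n + 1) → ℕ) (a : ℂ) :
    bdry (Finsupp.single σ a) =
      ∑ i : Fin (k + 2), ((-1 : ℂ) ^ (i : ℕ) * a) • Finsupp.single (σ ∘ i.succAbove) 1 :=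
  Finsupp.sum_single_index (by simp)

theorem bdry_single_fin_two (σ : Fin 2 → Fin (n + 1) → ℕ) :
    bdry (Finsupp.single σ 1) = Finsupp.single ![σ 1] 1 - Finsupp.single ![σ 0] 1 := by
  have h0 : σ ∘ Fin.succAbove 0 = ![σ 1] := by ext j : 1; fin_cases j; rfl
  have h1 : σ ∘ Fin.succAbove 1 = ![σ 0] := by ext j : 1; fin_cases j; rfl
  rw [bdry_single, Fin.sum_univ_two, h0, h1]
  simp only [Fin.val_zero, Fin.val_one, pow_zero, pow_one, mul_one, one_smul, neg_one_smul]
  abel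

theorem bdry_single_fin_three (a b c : Fin (n + 1) → ℕ) :
    bdry (Finsupp.single ![a, b, c] 1) = edg b c - edg a c + edg a b := by
  have h0 : ![a, b, c] ∘ Fin.succAbove 0 = ![b, c] := by ext j : 1; fin_cases j <;> rfl
  have h1 : ![a, b, c] ∘ Fin.succAbove 1 = ![a, c] := by ext j : 1; fin_cases j <;> rfl
  have h2 : ![a, b, c] ∘ Fin.succAbove 2 = ![a, b] := by ext j : 1; fin_cases j <;> rfl
  rw [bdry_single, Fin.sum_univ_three, h0, h1, h2]
  simp only [Fin.val_zero, Fin.val_one, Fin.val_two, pow_zero, pow_one, neg_one_sq, mul_one,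
    one_smul, neg_one_smul, edg]
  abel

noncomputable def bdryLinear (n k : ℕ) : PChain n (k + 1) →ₗ[ℂ] PChain n k :=
  Finsupp.linearCombination ℂ fun σ => bdry (Finsupp.single σ 1)

theorem bdryLinear_apply {k : ℕ} (c : PChain n (k + 1)) : bdryLinear n k c = bdry c := by
  rw [bdryLinear, Finsupp.linearCombination_apply, bdry]
  refine Finsupp.sum_congr fun σ _ => ?_
  simp only [bdry_single, Finset.smul_sum, smul_smul, mul_comm, one_mul]

variable (d : ℕ) (w : Fin (n + 1) → ℕ)

noncomputable def faceChains (k : ℕ) : Submodule ℂ (PChain n k) :=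
  Finsupp.supported ℂ ℂ {σ | IsFace d n w (univ.image σ)}

noncomputable def boundaries : Submodule ℂ (PChain n 1) :=
  (faceChains d w 2).map (bdryLinear n 1)

variable {d w}

theorem chainIn_iff_mem_faceChains {k : ℕ} {c : PChain n k} :
    ChainIn d n w c ↔ c ∈ faceChains d w k :=
  (Finsupp.mem_supported ℂ c).symm

theorem mem_boundaries_iff {c : PChain n 1} :
    c ∈ boundaries d w ↔ ∃ η, ChainIn d n w η ∧ bdry η = c := by
  simp [boundaries, chainIn_iff_mem_faceChains, bdryLinear_apply]

theorem triangle_mem_boundaries {a b c : Fin (n + 1) → ℕ}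
    (h : IsFace d n w (univ.image ![a, b, c])) : edg a b + edg b c - edg a c ∈ boundaries d w := by
  refine mem_boundaries_iff.2 ⟨Finsupp.single ![a, b, c] 1,
    chainIn_iff_mem_faceChains.2 (Finsupp.single_mem_supported ℂ 1 h), ?_⟩
  rw [bdry_single_fin_three]
  abel

theorem triangle_mem_boundaries_of_add_le {a b c : Fin (n + 1) → ℕ} (ha : a ∈ Adn d n)
    (hb : b ∈ Adn d n) (hc : c ∈ Adn d n) (h : a + b + c ≤ w) :
    edg a b + edg b c - edg a c ∈ boundaries d w :=
  triangle_mem_boundaries <| isFace_image_of_sum_le (fun j => by fin_cases j <;> assumption)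
    (by simpa [Fin.sum_univ_three] using h)

theorem edg_self_mem_boundaries {x : Fin (n + 1) → ℕ} (h : IsFace d n w (univ.image ![x, x])) :
    edg x x ∈ boundaries d w := by
  have himage : univ.image ![x, x, x] = univ.image ![x, x] := by
    ext; simp [Fin.exists_fin_succ]
  simpa using triangle_mem_boundaries (himage ▸ h : IsFace d n w (univ.image ![x, x, x]))

end Chains

section Squares

variable {d n : ℕ} {w a b c e : Fin (n + 1) → ℕ}

noncomputable def squareLoop (a b c e : Fin (n + 1) → ℕ) : PChain n 1 :=
  edg a b + edg b c + edg c e - edg a e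

theorem squareLoop_mem_boundaries_of_apex (hw : 4 * d ≤ ∑ i, w i) (ha : a ∈ Adn d n)
    (hb : b ∈ Adn d n) (hc : c ∈ Adn d n) (he : e ∈ Adn d n) (hab : a + b ≤ w)
    (hbc : b + c ≤ w) (hce : c + e ≤ w) (hae : a + e ≤ w)
    (hapex : d ≤ ∑ i, (a ⊓ c) i + ∑ i, (b ⊓ e) i) :
    squareLoop a b c e ∈ boundaries d w := by
  have hX : a ⊔ c + b ⊔ e ≤ w := fun i => by
    have := hab i; have := hbc i; have := hce i; have := hae i
    simp only [Pi.add_apply, Pi.sup_apply] at *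
    omega
  have hac := sum_sup_add_sum_inf a c
  have hbe := sum_sup_add_sum_inf b e
  rw [mem_Adn] at ha hb hc he
  obtain ⟨q, hq, hqX⟩ := exists_mem_Adn_add_le (d := d) hX (by
    simp only [Pi.add_apply, Finset.sum_add_distrib]
    omega)
  have hcone : ∀ x y, x ∈ Adn d n → y ∈ Adn d n → x + y ≤ a ⊔ c + b ⊔ e →
      edg x y + edg y q - edg x q ∈ boundaries d w := fun x y hx hy hxy =>
    triangle_mem_boundaries_of_add_le hx hy hq
      ((add_le_add hxy le_rfl).trans ((add_comm _ q).trans_le hqX))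
  have := sub_mem (add_mem (add_mem
    (hcone a b ha hb (add_le_add le_sup_left le_sup_left))
    (hcone b c hb hc ((add_comm b c).trans_le (add_le_add le_sup_right le_sup_left))))
    (hcone c e hc he (add_le_add le_sup_right le_sup_right)))
    (hcone a e ha he (add_le_add le_sup_left le_sup_right))
  convert this using 1
  simp only [squareLoop]
  abel

theorem squareLoop_mem_boundaries_of_sum_inf_le (hw : 4 * d ≤ ∑ i, w i) (ha : a ∈ Adn d n)
    (hb : b ∈ Adn d n) (hc : c ∈ Adn d n) (he : e ∈ Adn d n) (hab : a + b ≤ w)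
    (hbc : b + c ≤ w) (hce : c + e ≤ w) (hae : a + e ≤ w)
    (hle : ∑ i, (b ⊓ e) i ≤ ∑ i, (a ⊓ c) i) :
    squareLoop a b c e ∈ boundaries d w := by
  have hac := sum_sup_add_sum_inf a c
  have hdiff := sum_tsub_add_sum_inf e b
  have hA := mem_Adn.1 ha; have hB := mem_Adn.1 hb; have hC := mem_Adn.1 hc
  have hE := mem_Adn.1 he
  obtain ⟨z, hz, hlo, hzX⟩ := exists_mem_Adn_between (d := d) (lo := e - b)
    (X := b + a ⊔ c) (w := w) (fun i => by
      have := hab i; have := hbc i; have := hce i; have := hae i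
      simp only [Pi.add_apply, Pi.sup_apply, Pi.sub_apply] at *
      omega) (by omega) (by simp only [Pi.add_apply, Finset.sum_add_distrib]; omega)
  have hzX' : ∀ i, z i + (b i + max (a i) (c i)) ≤ w i := hzX
  -- `z ≥ e - b` meets `e` in at least `d - |b ⊓ e|`, enough for an apex
  have hmeet : ∑ i, (e - b) i ≤ ∑ i, (z ⊓ e) i :=
    Finset.sum_le_sum fun i _ => le_inf (hlo i) tsub_le_self
  have hsq := squareLoop_mem_boundaries_of_apex hw ha hz hc he
    (fun i => by have := hzX' i; simp only [Pi.add_apply]; omega)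
    (fun i => by have := hzX' i; simp only [Pi.add_apply]; omega) hce hae (by omega)
  have habz := triangle_mem_boundaries_of_add_le (w := w) ha hb hz
    (fun i => by have := hzX' i; simp only [Pi.add_apply]; omega)
  have hbzc := triangle_mem_boundaries_of_add_le (w := w) hb hz hc
    (fun i => by have := hzX' i; simp only [Pi.add_apply]; omega)
  convert add_mem (sub_mem habz hbzc) hsq using 1
  simp only [squareLoop]
  abel

theorem squareLoop_mem_boundaries_of_sum_inf_ge (hw : 4 * d ≤ ∑ i, w i) (ha : a ∈ Adn d n)
    (hb : b ∈ Adn d n) (hc : c ∈ Adn d n) (he : e ∈ Adn d n) (hab : a + b ≤ w)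
    (hbc : b + c ≤ w) (hce : c + e ≤ w) (hae : a + e ≤ w)
    (hle : ∑ i, (a ⊓ c) i ≤ ∑ i, (b ⊓ e) i) :
    squareLoop a b c e ∈ boundaries d w := by
  have hbe := sum_sup_add_sum_inf b e
  have hdiff := inf_comm c a ▸ sum_tsub_add_sum_inf a c
  have hA := mem_Adn.1 ha; have hB := mem_Adn.1 hb; have hC := mem_Adn.1 hc
  have hE := mem_Adn.1 he
  obtain ⟨z, hz, hlo, hzX⟩ := exists_mem_Adn_between (d := d) (lo := a - c)
    (X := c + b ⊔ e) (w := w) (fun i => by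
      have := hab i; have := hbc i; have := hce i; have := hae i
      simp only [Pi.add_apply, Pi.sup_apply, Pi.sub_apply] at *
      omega) (by omega) (by simp only [Pi.add_apply, Finset.sum_add_distrib]; omega)
  have hzX' : ∀ i, z i + (c i + max (b i) (e i)) ≤ w i := hzX
  have hmeet : ∑ i, (a - c) i ≤ ∑ i, (a ⊓ z) i :=
    Finset.sum_le_sum fun i _ => le_inf tsub_le_self (hlo i)
  have hsq := squareLoop_mem_boundaries_of_apex hw ha hb hz he hab
    (fun i => by have := hzX' i; simp only [Pi.add_apply]; omega)
    (fun i => by have := hzX' i; simp only [Pi.add_apply]; omega) hae (by omega)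
  have hzce := triangle_mem_boundaries_of_add_le (w := w) hz hc he
    (fun i => by have := hzX' i; simp only [Pi.add_apply]; omega)
  have hbzc := triangle_mem_boundaries_of_add_le (w := w) hb hz hc
    (fun i => by have := hzX' i; simp only [Pi.add_apply]; omega)
  convert add_mem (sub_mem hzce hbzc) hsq using 1
  simp only [squareLoop]
  abel

theorem squareLoop_mem_boundaries (hw : 4 * d ≤ ∑ i, w i) (ha : a ∈ Adn d n)
    (hb : b ∈ Adn d n) (hc : c ∈ Adn d n) (he : e ∈ Adn d n) (hab : a + b ≤ w)
    (hbc : b + c ≤ w) (hce : c + e ≤ w) (hae : a + e ≤ w) :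
    squareLoop a b c e ∈ boundaries d w :=
  (le_total (∑ i, (b ⊓ e) i) (∑ i, (a ⊓ c) i)).elim
    (squareLoop_mem_boundaries_of_sum_inf_le hw ha hb hc he hab hbc hce hae)
    (squareLoop_mem_boundaries_of_sum_inf_ge hw ha hb hc he hab hbc hce hae)

end Squares

section Cone

variable {d n : ℕ} {w : Fin (n + 1) → ℕ}

noncomputable def twoStepPath (p q x : Fin (n + 1) → ℕ) : PChain n 1 := edg p q + edg q x

theorem exists_mem_Adn_add_sup_le (hw : 4 * d ≤ ∑ i, w i) {p x : Fin (n + 1) → ℕ}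
    (hp : p ∈ Adn d n) (hx : x ∈ Adn d n) (hpw : p ≤ w) (hxw : x ≤ w) :
    ∃ u ∈ Adn d n, u + p ⊔ x ≤ w := by
  have := sum_sup_add_sum_inf p x
  rw [mem_Adn] at hp hx
  exact exists_mem_Adn_add_le (sup_le hpw hxw) (by omega)

variable {p : Fin (n + 1) → ℕ} {u : (Fin (n + 1) → ℕ) → Fin (n + 1) → ℕ}

theorem edg_add_twoStepPath_sub_mem_boundaries (hw : 4 * d ≤ ∑ i, w i) (hp : p ∈ Adn d n)
    (hu : ∀ z ∈ Adn d n, z ≤ w → u z ∈ Adn d n ∧ u z + p ⊔ z ≤ w)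
    {x y : Fin (n + 1) → ℕ} (hface : IsFace d n w (univ.image ![x, y])) :
    edg x y + twoStepPath p (u x) x - twoStepPath p (u y) y ∈ boundaries d w := by
  obtain rfl | hne := eq_or_ne x y
  · simpa using edg_self_mem_boundaries hface
  have hx : x ∈ Adn d n := hface.mem_Adn 0
  have hy : y ∈ Adn d n := hface.mem_Adn 1
  have hxyw := hface.add_le_of_ne hne
  obtain ⟨hux, huxw⟩ := hu x hx (le_self_add.trans hxyw)
  obtain ⟨huy, huyw⟩ := hu y hy (le_add_self.trans hxyw)
  have hpw : p ≤ w := le_sup_left.trans (le_add_self.trans huxw)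
  obtain ⟨t, ht, htX⟩ := exists_mem_Adn_add_le (d := d) (sup_le hxyw hpw) (by
    have := sum_sup_add_sum_inf (x + y) p
    simp only [Pi.add_apply, Finset.sum_add_distrib] at this
    rw [mem_Adn] at hp hx hy
    omega)
  have htX' : ∀ i, t i + max (x i + y i) (p i) ≤ w i := htX
  have hsq : ∀ z, z ∈ Adn d n → u z ∈ Adn d n → u z + p ⊔ z ≤ w → z + t ≤ w →
      squareLoop p (u z) z t ∈ boundaries d w := fun z hz huz huzw hzt =>
    squareLoop_mem_boundaries hw hp huz hz ht
      (fun i => by have := huzw i; simp only [Pi.add_apply, Pi.sup_apply] at *; omega)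
      (fun i => by have := huzw i; simp only [Pi.add_apply, Pi.sup_apply] at *; omega) hzt
      (fun i => by have := htX' i; simp only [Pi.add_apply]; omega)
  have htri := triangle_mem_boundaries_of_add_le (w := w) hx hy ht
    (fun i => by have := htX' i; simp only [Pi.add_apply]; omega)
  have hsqx := hsq x hx hux huxw (fun i => by have := htX' i; simp only [Pi.add_apply]; omega)
  have hsqy := hsq y hy huy huyw (fun i => by have := htX' i; simp only [Pi.add_apply]; omega)
  convert sub_mem (add_mem htri hsqx) hsqy using 1
  simp only [squareLoop, twoStepPath]
  abel

theorem sub_conePaths_bdry_mem_boundaries (hw : 4 * d ≤ ∑ i, w i) (hp : p ∈ Adn d n)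
    (hu : ∀ z ∈ Adn d n, z ≤ w → u z ∈ Adn d n ∧ u z + p ⊔ z ≤ w)
    {c : PChain n 1} (hc : c ∈ faceChains d w 1) :
    c - Finsupp.linearCombination ℂ (fun τ => twoStepPath p (u (τ 0)) (τ 0)) (bdry c) ∈
      boundaries d w := by
  set cone : PChain n 0 →ₗ[ℂ] PChain n 1 :=
    Finsupp.linearCombination ℂ fun τ => twoStepPath p (u (τ 0)) (τ 0)
  suffices (faceChains d w 1).map (LinearMap.id - cone ∘ₗ bdryLinear n 0) ≤ boundaries d w by
    simpa [bdryLinear_apply] using this ⟨c, hc, rfl⟩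
  rw [faceChains, Finsupp.supported_eq_span_single, Submodule.map_span_le]
  rintro _ ⟨σ, hσ, rfl⟩
  have hedge := edg_add_twoStepPath_sub_mem_boundaries hw hp hu (x := σ 0) (y := σ 1)
    (by rwa [vecCons_eta_fin_two])
  rw [edg, vecCons_eta_fin_two] at hedge
  simp only [LinearMap.sub_apply, LinearMap.id_apply, LinearMap.comp_apply, bdryLinear_apply,
    bdry_single_fin_two, map_sub, cone, Finsupp.linearCombination_single, one_smul,
    Matrix.cons_val_zero]
  convert hedge using 1
  abel

end Cone

theorem hvanish_one_of_four_mul_le_sum {d n : ℕ} {w : Fin (n + 1) → ℕ}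
    (hw : 4 * d ≤ ∑ i, w i) : Hvanish d n 1 w := by
  obtain ⟨p, hp, hpw⟩ := exists_mem_Adn_add_le (d := d) (X := 0) (w := w) zero_le
    (by simp only [Pi.zero_apply, sum_const_zero, zero_add]; omega)
  rw [add_zero] at hpw
  have hu : ∀ z, ∃ u, z ∈ Adn d n → z ≤ w → u ∈ Adn d n ∧ u + p ⊔ z ≤ w := fun z => by
    by_cases hz : z ∈ Adn d n ∧ z ≤ w
    · obtain ⟨u, hu, huw⟩ := exists_mem_Adn_add_sup_le hw hp hz.1 hpw hz.2
      exact ⟨u, fun _ _ => ⟨hu, huw⟩⟩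
    · exact ⟨z, fun h h' => absurd ⟨h, h'⟩ hz⟩
  choose u hu using hu
  intro c hc hcyc
  have := sub_conePaths_bdry_mem_boundaries hw hp hu (chainIn_iff_mem_faceChains.1 hc)
  rw [show bdry c = 0 from hcyc, map_zero, sub_zero] at this
  exact mem_boundaries_iff.1 this

theorem stmt7_general (d n : ℕ) (g : Fin (n + 1) → ℕ)
    (hg : ∃ s : Multiset (Fin (n + 1) → ℕ),
      (∀ a ∈ s, a ∈ Adn d n) ∧ 4 ≤ Multiset.card s ∧ s.sum = g)
    (v : Fin (n + 1) → ℕ) :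
    Hvanish d n 1 (g + v) := by
  obtain ⟨s, hs, hcard, rfl⟩ := hg
  apply hvanish_one_of_four_mul_le_sum
  calc 4 * d ≤ Multiset.card s * d := Nat.mul_le_mul_right d hcard
    _ = ∑ i, s.sum i := (sum_multiset_sum_of_forall_mem_Adn hs).symm
    _ ≤ ∑ i, (s.sum + v) i := Finset.sum_le_sum fun i _ => Nat.le_add_right _ _

/-- Lemma `H₁(Δ_{g+v}) = 0`.  Let `d ≥ 2` and let `g ∈ ℕ^{n+1}` be a sum
of at least `4` elements of `A_{d,n}`.  Then for every `v ∈ ℕ^{n+1}` the first reduced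
simplicial homology of `Δ_{g+v}` with `ℂ`-coefficients vanishes: every `1`-cycle supported
on `Δ_{g+v}` bounds a `2`-chain supported on `Δ_{g+v}`. -/
theorem stmt7 (d n : ℕ) (hd : 2 ≤ d) (g : Fin (n + 1) → ℕ)
    (hg : ∃ s : Multiset (Fin (n + 1) → ℕ),
      (∀ a ∈ s, a ∈ Adn d n) ∧ 4 ≤ Multiset.card s ∧ s.sum = g)
    (v : Fin (n + 1) → ℕ) :
    Hvanish d n 1 (g + v) :=
  stmt7_general d n g hg v
end

section
/- Let d, n, p ∈ ℕ and b ∈ ℕ A_{d,n} with deg b ≥ p+2, and let γ be a (p−1)-cycle in Δ_b. Assume: (a) H_{p−3}(Δ_{c−e_1}) = 0 for all c ∈ ℕ A_{d,n} with deg c ≥ p+1, and (b) H_{q−1}(Δ_β) = 0 for all β ∈ ℕ A_{d,n} with deg β ≥ q+2 and all q ≤ p−1 (i.e. O_{P^n}(d) satisfies N_{p−1}). Then there exists a (p−1)-cycle γ' in Δ_{(0, b_1+b_2, b_3,...,b_{n+1})} that is homologous to γ in X_b = ⋃_{k=0}^{b_1} Δ_{b − k e_1 + k e_2}. -/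
/-!
Let `L_v ⊆ Δ_v` be the subcomplex of faces whose vertex sum has first coordinate `< v₁`; for
`v₁ > 0` it is `Δ_{v-e₁}`, and for `v₁ = 0` it is empty. The heart of the proof is that the pair
`(Δ_v, L_v)` has vanishing relative homology in degrees `≤ p - 1` once `deg v` is large.

If `v₁ = 0` this is the vanishing of `H̃(Δ_v)` granted by property `N_{p-1}`. If `v₁ > 0`, a
simplex outside `L_v` has a vertex `a` with `a₁ > 0`, and the part `φ` of a relative cycle made
of the simplices through `a` is again a relative cycle. The faces of `∂φ` missing `a` form
a relative cycle `ψ` of `(Δ_{v-a}, L_{v-a})` one dimension lower; by induction `ψ ≡ ∂θ'` modulo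
`L_{v-a}`, and then `φ ≡ ∂(a ∗ (φ - θ'))` modulo `L_v`. Removing the vertices one by one kills
the part of the relative cycle outside `L_v`.

Applied to `v = b - j e₁ + j e₂` for `j = 0, …, b₁ - 1`, this moves `γ` inside `X_b`, one unit
of the first coordinate at a time, into `Δ_{(0, b₁+b₂, b₃, …)}`. For `n = 0` the unique vertex
is a cone point of `Δ_b` and `γ` bounds its cone.
-/

open Finset

section Chains

variable {n k : ℕ}

lemma bdry_eq_sum_mapDomain (c : PChain n (k + 1)) :
    bdry c = ∑ i : Fin (k + 2), (-1 : ℂ) ^ (i : ℕ) • c.mapDomain (· ∘ i.succAbove) := by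
  simp only [bdry, Finsupp.mapDomain, Finsupp.smul_sum, Finsupp.smul_single, smul_eq_mul, mul_one]
  rw [← Finsupp.sum_finsetSum_comm]

lemma vjoin_eq_mapDomain (a : Fin (n + 1) → ℕ) (c : PChain n k) :
    vjoin a c = c.mapDomain (Fin.cons a) := by
  simp only [vjoin, Finsupp.mapDomain, Finsupp.smul_single_one]

lemma aug_mapDomain {k' : ℕ}
    (f : (Fin (k + 1) → Fin (n + 1) → ℕ) → Fin (k' + 1) → Fin (n + 1) → ℕ) (c : PChain n k) :
    aug (c.mapDomain f) = aug c :=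
  Finsupp.sum_mapDomain_index (fun _ => rfl) (fun _ _ _ => rfl)

lemma bdry_add (c c' : PChain n (k + 1)) : bdry (c + c') = bdry c + bdry c' := by
  simp only [bdry_eq_sum_mapDomain, Finsupp.mapDomain_add, smul_add, Finset.sum_add_distrib]

lemma bdry_sub (c c' : PChain n (k + 1)) : bdry (c - c') = bdry c - bdry c' := by
  simp only [bdry_eq_sum_mapDomain, Finsupp.mapDomain_sub, smul_sub, Finset.sum_sub_distrib]

lemma bdry_zero : bdry (0 : PChain n (k + 1)) = 0 := by
  simp [bdry_eq_sum_mapDomain]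

lemma vjoin_add (a : Fin (n + 1) → ℕ) (c c' : PChain n k) :
    vjoin a (c + c') = vjoin a c + vjoin a c' := by
  simp only [vjoin_eq_mapDomain, Finsupp.mapDomain_add]

lemma neg_one_pow_add_neg_one_pow_succAbove_predAbove (i : Fin (k + 3)) (j : Fin (k + 2)) :
    (-1 : ℂ) ^ ((i : ℕ) + j) + (-1) ^ ((i.succAbove j : ℕ) + (j.predAbove i : ℕ)) = 0 := by
  obtain h | h : (i : ℕ) + j = (i.succAbove j : ℕ) + (j.predAbove i : ℕ) + 1 ∨
      (i.succAbove j : ℕ) + (j.predAbove i : ℕ) = (i : ℕ) + j + 1 := by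
    simp only [Fin.succAbove, Fin.predAbove, Fin.lt_def, Fin.val_castSucc, apply_dite Fin.val,
      Fin.val_pred, Fin.coe_castPred, apply_ite Fin.val, Fin.val_succ]
    split_ifs <;> omega
  all_goals rw [h, pow_succ]; ring

/-- The terms of `∂∂c` cancel in pairs under `(i, j) ↦ (i.predAbove j, j.succAbove i)`, by the
simplicial identity `Fin.succAbove_succAbove_succAbove_predAbove`. -/
lemma bdry_bdry (c : PChain n (k + 2)) : bdry (bdry c) = 0 := by
  simp only [bdry_eq_sum_mapDomain, Finsupp.mapDomain_finsetSum, Finsupp.mapDomain_smul,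
    Finset.smul_sum, smul_smul, ← Finsupp.mapDomain_comp, ← pow_add]
  rw [← Finset.sum_product']
  refine Finset.sum_ninvolution (fun p => (p.1.predAbove p.2, p.2.succAbove p.1))
    (fun p => ?_) (fun p _ => ?_) (fun _ => Finset.mem_univ _)
    (fun p => by simp [Fin.succAbove_succAbove_predAbove, Fin.predAbove_predAbove_succAbove])
  · have hcomp : ((· ∘ (p.1.predAbove p.2).succAbove) ∘ (· ∘ (p.2.succAbove p.1).succAbove) :
        (Fin (k + 3) → Fin (n + 1) → ℕ) → _) = (· ∘ p.1.succAbove) ∘ (· ∘ p.2.succAbove) := by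
      funext σ
      exact congrArg (σ ∘ ·) (funext (Fin.succAbove_succAbove_succAbove_predAbove p.2 p.1))
    rw [hcomp, ← add_smul, add_comm (_ : ℕ) (p.2 : ℕ),
      add_comm (_ : ℕ) ((p.2.succAbove p.1 : Fin (k + 3)) : ℕ),
      neg_one_pow_add_neg_one_pow_succAbove_predAbove, zero_smul]
  · exact fun he => Fin.succAbove_ne p.2 p.1 (congrArg Prod.snd he)

lemma aug_bdry (c : PChain n 1) : aug (bdry c) = 0 := by
  have aug_eq : ∀ c' : PChain n 0,
      aug c' = Finsupp.lsum ℂ (fun _ => (LinearMap.id : ℂ →ₗ[ℂ] ℂ)) c' := fun _ => rfl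
  rw [aug_eq, bdry_eq_sum_mapDomain, Fin.sum_univ_two, map_add, map_smul, map_smul, ← aug_eq,
    ← aug_eq, aug_mapDomain, aug_mapDomain]
  simp

lemma comp_succ_comp_cons (a : Fin (n + 1) → ℕ) :
    (· ∘ Fin.succ) ∘ (fun τ : Fin (k + 1) → Fin (n + 1) → ℕ =>
      (Fin.cons a τ : Fin (k + 2) → Fin (n + 1) → ℕ)) = id :=
  funext fun τ => Fin.cons_comp_succ a τ

lemma bdry_vjoin (a : Fin (n + 1) → ℕ) (c : PChain n (k + 1)) :
    bdry (vjoin a c) = c - vjoin a (bdry c) := by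
  have hface : ∀ j : Fin (k + 2), (· ∘ j.succ.succAbove) ∘ (fun τ : Fin (k + 2) → _ =>
      (Fin.cons a τ : Fin (k + 3) → Fin (n + 1) → ℕ)) =
        (fun τ => Fin.cons a τ) ∘ (· ∘ j.succAbove) :=
    fun j => funext fun τ => Fin.cons_comp_succ_succAbove a τ j
  rw [bdry_eq_sum_mapDomain, Fin.sum_univ_succ, bdry_eq_sum_mapDomain, vjoin_eq_mapDomain,
    vjoin_eq_mapDomain, Finsupp.mapDomain_finsetSum]
  simp only [Fin.val_zero, pow_zero, one_smul, Fin.val_succ, pow_succ, mul_neg_one, neg_smul,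
    Finset.sum_neg_distrib, Finsupp.mapDomain_smul, ← Finsupp.mapDomain_comp, hface,
    Fin.succAbove_zero, comp_succ_comp_cons, Finsupp.mapDomain_id, sub_eq_add_neg]

lemma bdry_vjoin_of_dim_zero (a : Fin (n + 1) → ℕ) (c : PChain n 0) :
    bdry (vjoin a c) = c - aug c • Finsupp.single (fun _ => a) 1 := by
  have hconst : (· ∘ (1 : Fin 2).succAbove) ∘ (fun τ : Fin 1 → _ =>
      (Fin.cons a τ : Fin 2 → Fin (n + 1) → ℕ)) = fun _ _ => a := by
    funext τ l
    simp [Subsingleton.elim l 0, Fin.succAbove]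
  rw [bdry_eq_sum_mapDomain, vjoin_eq_mapDomain, Fin.sum_univ_two, ← Finsupp.mapDomain_comp,
    ← Finsupp.mapDomain_comp, Fin.succAbove_zero, comp_succ_comp_cons, hconst,
    Finsupp.mapDomain_id, Finsupp.smul_single_one, aug, Finsupp.mapDomain, ← Finsupp.single_sum]
  simp [sub_eq_add_neg]

lemma mem_support_bdry {c : PChain n (k + 1)} {σ : Fin (k + 1) → Fin (n + 1) → ℕ}
    (h : σ ∈ (bdry c).support) : ∃ τ ∈ c.support, ∃ i : Fin (k + 2), τ ∘ i.succAbove = σ := by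
  classical
  rw [bdry_eq_sum_mapDomain] at h
  obtain ⟨i, -, hi⟩ := Finset.mem_biUnion.1 (Finsupp.support_finsetSum h)
  obtain ⟨τ, hτ, rfl⟩ := Finset.mem_image.1 (Finsupp.mapDomain_support (Finsupp.support_smul hi))
  exact ⟨τ, hτ, i, rfl⟩

lemma mem_support_vjoin {a : Fin (n + 1) → ℕ} {c : PChain n k}
    {σ : Fin (k + 2) → Fin (n + 1) → ℕ} (h : σ ∈ (vjoin a c).support) :
    ∃ τ ∈ c.support, Fin.cons a τ = σ := by
  classical
  rw [vjoin_eq_mapDomain] at h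
  exact Finset.mem_image.1 (Finsupp.mapDomain_support h)

lemma forall_mem_support_bdry {P : (Fin (k + 1) → Fin (n + 1) → ℕ) → Prop}
    {c : PChain n (k + 1)} (h : ∀ τ ∈ c.support, ∀ i : Fin (k + 2), P (τ ∘ i.succAbove)) :
    ∀ σ ∈ (bdry c).support, P σ := by
  intro σ hσ
  obtain ⟨τ, hτ, i, rfl⟩ := mem_support_bdry hσ
  exact h τ hτ i

lemma forall_mem_support_vjoin {P : (Fin (k + 2) → Fin (n + 1) → ℕ) → Prop}
    {a : Fin (n + 1) → ℕ} {c : PChain n k} (h : ∀ τ ∈ c.support, P (Fin.cons a τ)) :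
    ∀ σ ∈ (vjoin a c).support, P σ := by
  intro σ hσ
  obtain ⟨τ, hτ, rfl⟩ := mem_support_vjoin hσ
  exact h τ hτ

end Chains

section Supports

variable {ι M : Type*} [AddGroup M] {P : ι → Prop} {c c' : ι →₀ M}

lemma forall_mem_support_add (hc : ∀ σ ∈ c.support, P σ) (hc' : ∀ σ ∈ c'.support, P σ) :
    ∀ σ ∈ (c + c').support, P σ := by
  classical
  intro σ hσ
  exact (Finset.mem_union.1 (Finsupp.support_add hσ)).elim (hc σ) (hc' σ)

lemma forall_mem_support_sub (hc : ∀ σ ∈ c.support, P σ) (hc' : ∀ σ ∈ c'.support, P σ) :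
    ∀ σ ∈ (c - c').support, P σ := by
  classical
  intro σ hσ
  exact (Finset.mem_union.1 (Finsupp.support_sub hσ)).elim (hc σ) (hc' σ)

lemma forall_mem_support_zero : ∀ σ ∈ (0 : ι →₀ M).support, P σ := by simp

end Supports

section Vertices

variable {α : Type*} [DecidableEq α] {k : ℕ}

lemma image_comp_succAbove_subset (τ : Fin (k + 2) → α) (i : Fin (k + 2)) :
    univ.image (τ ∘ i.succAbove) ⊆ univ.image τ := by
  rw [← image_image]
  exact image_subset_image (subset_univ _)

lemma image_cons (a : α) (τ : Fin (k + 1) → α) :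
    univ.image (Fin.cons a τ : Fin (k + 2) → α) = insert a (univ.image τ) := by
  ext x
  simp [Fin.exists_fin_succ, eq_comm]

lemma sum_insert_le_add (f : α → ℕ) (a : α) (F : Finset α) :
    ∑ x ∈ insert a F, f x ≤ f a + ∑ x ∈ F, f x := by
  by_cases ha : a ∈ F
  · rw [insert_eq_of_mem ha]
    exact Nat.le_add_left _ _
  · rw [sum_insert ha]

lemma add_sum_le_of_insert_subset (f : α → ℕ) {a : α} {F G : Finset α} (haF : a ∉ F)
    (h : insert a F ⊆ G) : f a + ∑ x ∈ F, f x ≤ ∑ x ∈ G, f x :=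
  (sum_insert haF).symm.le.trans (sum_le_sum_of_subset h)

end Vertices

section Faces

variable {d n k : ℕ} {v w a : Fin (n + 1) → ℕ} {F G : Finset (Fin (n + 1) → ℕ)}

lemma IsFace.subset (h : IsFace d n v F) (hGF : G ⊆ F) : IsFace d n v G :=
  ⟨(coe_subset.2 hGF).trans h.1, fun i => (sum_le_sum_of_subset hGF).trans (h.2 i)⟩

lemma IsFace.mono (h : IsFace d n v F) (hvw : v ≤ w) : IsFace d n w F :=
  ⟨h.1, fun i => (h.2 i).trans (hvw i)⟩

lemma IsFace.le_of_mem (h : IsFace d n v F) (ha : a ∈ F) : a ≤ v := fun i =>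
  (single_le_sum (f := fun x => x i) (fun _ _ => Nat.zero_le _) ha).trans (h.2 i)

lemma IsFace.insert_of_sub (h : IsFace d n (v - a) F) (ha : a ∈ Adn d n) (hav : a ≤ v) :
    IsFace d n v (insert a F) := by
  refine ⟨by simpa [Set.insert_subset_iff] using ⟨ha, h.1⟩, fun i => ?_⟩
  have := h.2 i
  have := hav i
  have := sum_insert_le_add (· i) a F
  simp only [Pi.sub_apply] at *
  omega

lemma IsFace.sub_of_insert_subset (h : IsFace d n v F) (hG : insert a G ⊆ F) (haG : a ∉ G) :
    IsFace d n (v - a) G := by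
  refine ⟨(coe_subset.2 ((subset_insert a G).trans hG)).trans h.1, fun i => ?_⟩
  have := (add_sum_le_of_insert_subset (· i) haG hG).trans (h.2 i)
  simp only [Pi.sub_apply]
  omega

lemma ChainIn.mono {c : PChain n k} (h : ChainIn d n v c) (hvw : v ≤ w) : ChainIn d n w c :=
  fun σ hσ => (h σ hσ).mono hvw

lemma ChainIn.filter {c : PChain n k} (h : ChainIn d n v c)
    (p : (Fin (k + 1) → Fin (n + 1) → ℕ) → Prop) [DecidablePred p] :
    ChainIn d n v (c.filter p) :=
  fun σ hσ => h σ (mem_filter.1 hσ).1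

lemma chainIn_bdry {c : PChain n (k + 1)} (hc : ChainIn d n v c) : ChainIn d n v (bdry c) :=
  forall_mem_support_bdry fun τ hτ i => (hc τ hτ).subset (image_comp_succAbove_subset τ i)

lemma ChainIn.vjoin_of_mem {c : PChain n k} (hc : ChainIn d n v c)
    (hac : ∀ τ ∈ c.support, a ∈ univ.image τ) : ChainIn d n v (vjoin a c) :=
  forall_mem_support_vjoin fun τ hτ => by
    rw [image_cons, insert_eq_of_mem (hac τ hτ)]
    exact hc τ hτ

end Faces

section RelativeHomology

variable {d n k : ℕ}

def FirstSumLt (v : Fin (n + 1) → ℕ) (c : PChain n k) : Prop :=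
  ∀ σ ∈ c.support, ∑ x ∈ univ.image σ, x 0 < v 0

def supportFirstSumGe (v : Fin (n + 1) → ℕ) (c : PChain n k) :
    Finset (Fin (k + 1) → Fin (n + 1) → ℕ) :=
  c.support.filter fun σ => v 0 ≤ ∑ x ∈ univ.image σ, x 0

/-- Relative cycles of `(Δ_v, L_v)`, where `L_v` is the subcomplex of faces whose vertex sum has
first coordinate `< v 0`: it is `Δ_{v - e₁}` if `v 0 > 0` and the empty complex `{∅}` if
`v 0 = 0`, in which case relative cycles are the reduced cycles of `Δ_v`. -/
def IsRelCycle (v : Fin (n + 1) → ℕ) : ∀ {k : ℕ}, PChain n k → Prop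
  | 0, c => v 0 = 0 → aug c = 0
  | _ + 1, c => FirstSumLt v (bdry c)

def RelAcyclicOn (d n : ℕ) (v : Fin (n + 1) → ℕ) {k : ℕ}
    (S : Set (Fin (k + 1) → Fin (n + 1) → ℕ)) : Prop :=
  ∀ φ : PChain n k, ChainIn d n v φ → ↑φ.support ⊆ S → IsRelCycle v φ →
    ∃ θ : PChain n (k + 1), ChainIn d n v θ ∧ FirstSumLt v (φ - bdry θ)

abbrev RelAcyclic (d n k : ℕ) (v : Fin (n + 1) → ℕ) : Prop :=
  RelAcyclicOn d n v (Set.univ : Set (Fin (k + 1) → Fin (n + 1) → ℕ))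

/-- Hypothesis (b): property `N_p` in the form of the Campillo–Pisón–Sturmfels criterion. -/
def PropertyN (d n p : ℕ) : Prop :=
  ∀ q, 1 ≤ q → q ≤ p → ∀ β ∈ AddSubmonoid.closure (Adn d n),
    (q + 2) * d ≤ ∑ i, β i → Hvanish d n (q - 1) β

variable {v a : Fin (n + 1) → ℕ}

lemma ChainIn.sub_ee_zero_of_firstSumLt {c : PChain n k} (hc : ChainIn d n v c)
    (hlt : FirstSumLt v c) : ChainIn d n (v - ee 0) c := fun σ hσ =>
  ⟨(hc σ hσ).1, fun i => by
    have := (hc σ hσ).2 i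
    have := hlt σ hσ
    by_cases hi : i = 0 <;> simp only [Pi.sub_apply, ee, hi, if_true, if_false] <;> omega⟩

lemma firstSumLt_bdry_filter_mem {φ : PChain n (k + 1)} (hφ : ChainIn d n v φ)
    (hbd : FirstSumLt v (bdry φ)) (ha0 : 0 < a 0) :
    FirstSumLt v (bdry (φ.filter (a ∈ univ.image ·))) := by
  intro σ hσ
  by_contra! hge
  obtain ⟨τ, hτ, i, rfl⟩ := mem_support_bdry hσ
  rw [Finsupp.support_filter, mem_filter] at hτ
  -- a face outside `L_v` of a simplex of `Δ_v` keeps every vertex with positive first coordinate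
  have haσ : a ∈ univ.image (τ ∘ i.succAbove) := by
    by_contra haσ
    have := (add_sum_le_of_insert_subset (· 0) haσ
      (insert_subset hτ.2 (image_comp_succAbove_subset τ i))).trans ((hφ τ hτ.1).2 0)
    omega
  have hφσ : bdry φ (τ ∘ i.succAbove) = 0 :=
    Finsupp.notMem_support_iff.1 fun h => (hbd _ h).not_ge hge
  have hrest : bdry (φ.filter (a ∉ univ.image ·)) (τ ∘ i.succAbove) = 0 := by
    refine Finsupp.notMem_support_iff.1 fun h => ?_
    obtain ⟨ρ, hρ, j, hρj⟩ := mem_support_bdry h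
    rw [Finsupp.support_filter, mem_filter] at hρ
    exact hρ.2 (image_comp_succAbove_subset ρ j (hρj ▸ haσ))
  rw [← Finsupp.filter_add_filter_not φ (a ∈ univ.image ·), bdry_add, Finsupp.add_apply, hrest,
    add_zero] at hφσ
  exact Finsupp.mem_support_iff.1 hσ hφσ

lemma IsRelCycle.filter_mem (hv : 0 < v 0) {φ : PChain n k} (hφ : ChainIn d n v φ)
    (h : IsRelCycle v φ) (ha0 : 0 < a 0) : IsRelCycle v (φ.filter (a ∈ univ.image ·)) := by
  cases k with
  | zero => exact fun h0 => absurd h0 hv.ne'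
  | succ k => exact firstSumLt_bdry_filter_mem hφ h ha0

lemma IsRelCycle.sub_bdry (hv : 0 < v 0) {φ : PChain n k} (h : IsRelCycle v φ)
    (θ : PChain n (k + 1)) : IsRelCycle v (φ - bdry θ) := by
  cases k with
  | zero => exact fun h0 => absurd h0 hv.ne'
  | succ k =>
    change FirstSumLt v (bdry (φ - bdry θ))
    rwa [bdry_sub, bdry_bdry, sub_zero]

lemma ChainIn.filter_notMem_bdry {φ : PChain n (k + 1)} (hφ : ChainIn d n v φ)
    (hstar : ∀ τ ∈ φ.support, a ∈ univ.image τ) :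
    ChainIn d n (v - a) ((bdry φ).filter (a ∉ univ.image ·)) := by
  intro σ hσ
  rw [Finsupp.support_filter, mem_filter] at hσ
  obtain ⟨τ, hτ, i, rfl⟩ := mem_support_bdry hσ.1
  exact (hφ τ hτ).sub_of_insert_subset
    (insert_subset (hstar τ hτ) (image_comp_succAbove_subset τ i)) hσ.2

lemma isRelCycle_filter_notMem_bdry {φ : PChain n (k + 1)} (hbd : FirstSumLt v (bdry φ)) :
    IsRelCycle (v - a) ((bdry φ).filter (a ∉ univ.image ·)) := by
  cases k with
  | zero =>
    intro hva
    have hψ : (bdry φ).filter (a ∉ univ.image ·) = bdry φ := by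
      refine (Finsupp.filter_eq_self_iff _ _).2 fun σ hσ haσ => ?_
      have := hbd σ (Finsupp.mem_support_iff.2 hσ)
      have := single_le_sum (f := fun x : Fin (n + 1) → ℕ => x 0) (fun _ _ => Nat.zero_le _) haσ
      simp only [Pi.sub_apply] at hva
      omega
    rw [hψ]
    exact aug_bdry φ
  | succ k =>
    intro σ hσ
    by_contra! hge
    have hψ : bdry ((bdry φ).filter (a ∉ univ.image ·)) =
        -bdry ((bdry φ).filter (a ∈ univ.image ·)) := by
      rw [eq_neg_iff_add_eq_zero, ← bdry_add, add_comm, Finsupp.filter_add_filter_not, bdry_bdry]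
    obtain ⟨τ, hτ, i, rfl⟩ := mem_support_bdry hσ
    have haσ : a ∉ univ.image (τ ∘ i.succAbove) := fun h =>
      (mem_filter.1 hτ).2 (image_comp_succAbove_subset τ i h)
    rw [hψ, Finsupp.support_neg] at hσ
    obtain ⟨ρ, hρ, j, hρj⟩ := mem_support_bdry hσ
    rw [Finsupp.support_filter, mem_filter] at hρ
    have := add_sum_le_of_insert_subset (· 0) haσ
      (insert_subset hρ.2 (hρj ▸ image_comp_succAbove_subset ρ j))
    have := hbd ρ hρ.1
    simp only [Pi.sub_apply] at hge
    omega

lemma relAcyclicOn_star_zero {y : Fin (n + 1) → ℕ} (hy : y ∈ Adn d n) (hya : y ≤ v - a)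
    (hav : a ≤ v) (ha0 : 0 < a 0) :
    RelAcyclicOn d n v {σ : Fin 1 → Fin (n + 1) → ℕ | a ∈ univ.image σ} := by
  intro φ hφ hstar _
  refine ⟨vjoin y φ, forall_mem_support_vjoin fun τ hτ => ?_, ?_⟩
  · have hτa : univ.image τ = {a} := by
      have h := hstar hτ
      ext x
      simp_all [eq_comm]
    have ha := hφ τ hτ
    rw [show image τ univ = univ.image τ from rfl, hτa] at ha
    rw [image_cons, hτa]
    refine (IsFace.insert_of_sub ⟨by simpa using ha.1, fun i => ?_⟩ hy fun i => ?_)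
    all_goals have := hya i; have := hav i; simp only [Pi.sub_apply, sum_singleton] at *; omega
  · rw [bdry_vjoin_of_dim_zero, sub_sub_cancel]
    intro σ hσ
    rw [Finsupp.support_single_subset (Finsupp.support_smul hσ) |> mem_singleton.1,
      image_const univ_nonempty, sum_singleton]
    have := hya 0
    have := hav 0
    simp only [Pi.sub_apply] at *
    omega

lemma relAcyclicOn_star_succ (hR : RelAcyclic d n k (v - a)) (ha : a ∈ Adn d n) (hav : a ≤ v)
    (ha0 : 0 < a 0) :
    RelAcyclicOn d n v {σ : Fin (k + 2) → Fin (n + 1) → ℕ | a ∈ univ.image σ} := by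
  intro φ hφ hstar hcyc
  change FirstSumLt v (bdry φ) at hcyc
  obtain ⟨θ', hθ', hμ'⟩ := hR _ (hφ.filter_notMem_bdry hstar) (Set.subset_univ _)
    (isRelCycle_filter_notMem_bdry hcyc)
  refine ⟨vjoin a (φ - θ'), forall_mem_support_vjoin fun τ hτ => ?_, ?_⟩
  · rw [image_cons]
    rcases mem_union.1 (Finsupp.support_sub hτ) with hτ | hτ
    · rw [insert_eq_of_mem (hstar hτ)]
      exact hφ τ hτ
    · exact (hθ' τ hτ).insert_of_sub ha hav
  -- `φ - ∂(a ∗ (φ - θ')) = θ' + a ∗ (faces of ∂φ through a) + a ∗ (ψ - ∂θ')`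
  have hsplit : (bdry φ).filter (a ∈ univ.image ·) +
      ((bdry φ).filter (a ∉ univ.image ·) - bdry θ') = bdry φ - bdry θ' := by
    rw [← add_sub_assoc, Finsupp.filter_add_filter_not]
  rw [bdry_vjoin, bdry_sub, ← hsplit, vjoin_add,
    show ∀ x y z : PChain n (k + 1), φ - (φ - x - (y + z)) = x + y + z from fun _ _ _ => by abel]
  refine forall_mem_support_add (forall_mem_support_add (fun σ hσ => ?_) ?_) ?_
  · have := (hθ' σ hσ).2 0
    have := hav 0
    simp only [Pi.sub_apply] at *
    omega
  · refine forall_mem_support_vjoin fun τ hτ => ?_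
    rw [Finsupp.support_filter, mem_filter] at hτ
    rw [image_cons, insert_eq_of_mem hτ.2]
    exact hcyc τ hτ.1
  · refine forall_mem_support_vjoin fun τ hτ => ?_
    have := sum_insert_le_add (· 0) a (univ.image τ)
    have := hμ' τ hτ
    rw [image_cons]
    simp only [Pi.sub_apply] at *
    omega

lemma supportFirstSumGe_sub_bdry_subset {φ : PChain n k} {θ : PChain n (k + 1)}
    (hlow : FirstSumLt v (φ.filter (a ∈ univ.image ·) - bdry θ)) :
    supportFirstSumGe v (φ - bdry θ) ⊆ (supportFirstSumGe v φ).filter (a ∉ univ.image ·) := by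
  intro σ hσ
  rw [supportFirstSumGe, mem_filter,
    ← Finsupp.filter_add_filter_not φ (a ∈ univ.image ·), add_sub_right_comm] at hσ
  rcases mem_union.1 (Finsupp.support_add hσ.1) with h | h
  · exact (hlow σ h).not_ge hσ.2 |>.elim
  · rw [Finsupp.support_filter, mem_filter] at h
    exact mem_filter.2 ⟨mem_filter.2 ⟨h.1, hσ.2⟩, h.2⟩

lemma relAcyclic_of_forall_star (hv : 0 < v 0)
    (hstar : ∀ a ∈ Adn d n, a ≤ v → 0 < a 0 →
      RelAcyclicOn d n v {σ : Fin (k + 1) → Fin (n + 1) → ℕ | a ∈ univ.image σ}) :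
    RelAcyclic d n k v := by
  intro φ hφ _ hcyc
  induction hN : (supportFirstSumGe v φ).card using Nat.strong_induction_on generalizing φ with
  | _ N ih =>
  obtain hempty | ⟨τ, hτ⟩ := (supportFirstSumGe v φ).eq_empty_or_nonempty
  · refine ⟨0, forall_mem_support_zero, ?_⟩
    rw [bdry_zero, sub_zero]
    intro σ hσ
    by_contra! h
    exact eq_empty_iff_forall_notMem.1 hempty σ (mem_filter.2 ⟨hσ, h⟩)
  have hτ' := mem_filter.1 hτ
  obtain ⟨a, haτ, ha0⟩ := exists_ne_zero_of_sum_ne_zero (by omega : ∑ x ∈ univ.image τ, x 0 ≠ 0)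
  obtain ⟨θa, hθa, hlow⟩ := hstar a ((hφ τ hτ'.1).1 haτ) ((hφ τ hτ'.1).le_of_mem haτ)
    (Nat.pos_of_ne_zero ha0) (φ.filter (a ∈ univ.image ·)) (hφ.filter _)
    (fun σ hσ => (mem_filter.1 hσ).2) (hcyc.filter_mem hv hφ (Nat.pos_of_ne_zero ha0))
  have hlt : (supportFirstSumGe v (φ - bdry θa)).card < N :=
    hN ▸ (card_le_card (supportFirstSumGe_sub_bdry_subset hlow)).trans_lt
      (card_lt_card (filter_ssubset.2 ⟨τ, hτ, not_not.2 haτ⟩))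
  obtain ⟨θ, hθ, hlow'⟩ := ih _ hlt (φ - bdry θa)
    (forall_mem_support_sub hφ (chainIn_bdry hθa)) (Set.subset_univ _) (hcyc.sub_bdry hv θa) rfl
  exact ⟨θa + θ, forall_mem_support_add hθa hθ, by rwa [bdry_add, ← sub_sub]⟩

lemma relAcyclic_of_hvanish (hv : v 0 = 0) (h : Hvanish d n k v) : RelAcyclic d n k v := by
  intro φ hφ _ hcyc
  have hcyc' : IsCycle φ := by
    cases k with
    | zero => exact hcyc hv
    | succ k =>
      refine Finsupp.support_eq_empty.1 (eq_empty_of_forall_notMem fun σ hσ => ?_)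
      have := hcyc σ hσ
      omega
  obtain ⟨θ, hθ, rfl⟩ := h φ hφ hcyc'
  exact ⟨θ, hθ, by simp [FirstSumLt]⟩

end RelativeHomology

section Monoid

variable {d n : ℕ}

lemma exists_mem_Adn_le {w : Fin (n + 1) → ℕ} (h : d ≤ ∑ i, w i) : ∃ y ∈ Adn d n, y ≤ w := by
  induction d with
  | zero => exact ⟨0, by simp [Adn], fun _ => Nat.zero_le _⟩
  | succ d ih =>
    obtain ⟨y, hy, hyw⟩ := ih (by omega)
    obtain ⟨i, -, hi⟩ := exists_lt_of_sum_lt (show ∑ j, y j < ∑ j, w j from hy ▸ h)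
    refine ⟨y + Pi.single i 1, by simpa [Adn, sum_add_distrib] using hy, fun j => ?_⟩
    rcases eq_or_ne j i with rfl | hj
    · simpa using hi
    · simpa [hj] using hyw j

lemma sum_sub_of_mem_Adn {v a : Fin (n + 1) → ℕ} (ha : a ∈ Adn d n) (hav : a ≤ v) :
    ∑ i, (v - a) i = ∑ i, v i - d := by
  rw [← ha]
  exact sum_tsub_distrib _ fun i _ => hav i

lemma mem_closure_Adn_iff {x : Fin (n + 1) → ℕ} :
    x ∈ AddSubmonoid.closure (Adn d n) ↔ d ∣ ∑ i, x i := by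
  constructor
  · intro hx
    induction hx using AddSubmonoid.closure_induction with
    | mem y hy => exact hy ▸ dvd_rfl
    | zero => simp
    | add y z _ _ hy hz => simpa [sum_add_distrib] using dvd_add hy hz
  · rintro ⟨q, hq⟩
    induction q generalizing x with
    | zero =>
      rw [show x = 0 from funext fun i => (sum_eq_zero_iff.1 (by simpa using hq)) i (mem_univ i)]
      exact zero_mem _
    | succ q ih =>
      obtain ⟨y, hy, hyx⟩ := exists_mem_Adn_le (show d ≤ ∑ i, x i by rw [hq]; nlinarith)
      rw [← add_tsub_cancel_of_le hyx]
      refine add_mem (AddSubmonoid.subset_closure hy) (ih ?_)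
      rw [sum_sub_of_mem_Adn hy hyx, hq, Nat.mul_succ, Nat.add_sub_cancel]

lemma eq_const_of_mem_Adn_zero {x : Fin 1 → ℕ} (hx : x ∈ Adn d 0) : x = fun _ => d :=
  funext fun i => by simpa [Subsingleton.elim i 0, Adn] using hx

end Monoid

section Degree

variable {d n : ℕ} {v : Fin (n + 1) → ℕ}

lemma relAcyclic_zero_of_pos (hv : 0 < v 0) (hdeg : 2 * d ≤ ∑ i, v i) : RelAcyclic d n 0 v :=
  relAcyclic_of_forall_star hv fun a ha hav ha0 => by
    obtain ⟨y, hy, hya⟩ := exists_mem_Adn_le (d := d) (w := v - a)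
      (by rw [sum_sub_of_mem_Adn ha hav]; omega)
    exact relAcyclicOn_star_zero hy hya hav ha0

lemma relAcyclic_succ_of_pos {k : ℕ} (hv : 0 < v 0)
    (hR : ∀ a ∈ Adn d n, a ≤ v → RelAcyclic d n k (v - a)) : RelAcyclic d n (k + 1) v :=
  relAcyclic_of_forall_star hv fun a ha hav ha0 => relAcyclicOn_star_succ (hR a ha hav) ha hav ha0

lemma relAcyclic_of_propertyN_of_le {p : ℕ} (hN : PropertyN d n p) :
    ∀ k, k + 1 ≤ p → ∀ v : Fin (n + 1) → ℕ, d ∣ ∑ i, v i → (k + 3) * d ≤ ∑ i, v i →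
      RelAcyclic d n k v := by
  intro k
  induction k with
  | zero =>
    intro _ v hd hdeg
    rcases (v 0).eq_zero_or_pos with hv | hv
    · exact relAcyclic_of_hvanish hv (hN 1 le_rfl (by omega) v (mem_closure_Adn_iff.2 hd) hdeg)
    · exact relAcyclic_zero_of_pos hv (by omega)
  | succ k ih =>
    intro hk v hd hdeg
    rcases (v 0).eq_zero_or_pos with hv | hv
    · exact relAcyclic_of_hvanish hv
        (hN (k + 2) (by omega) hk v (mem_closure_Adn_iff.2 hd) hdeg)
    refine relAcyclic_succ_of_pos hv fun a ha hav => ih (by omega) _ ?_ ?_ <;>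
      rw [sum_sub_of_mem_Adn ha hav]
    · exact Nat.dvd_sub hd dvd_rfl
    · have : (k + 1 + 3) * d = (k + 3) * d + d := by ring
      omega

lemma relAcyclic_of_propertyN {m : ℕ} (hN : PropertyN d n (m + 2)) (hv : 0 < v 0)
    (hd : d ∣ ∑ i, v i) (hdeg : (m + 5) * d ≤ ∑ i, v i) : RelAcyclic d n (m + 2) v := by
  refine relAcyclic_succ_of_pos hv fun a ha hav =>
    relAcyclic_of_propertyN_of_le hN (m + 1) le_rfl _ ?_ ?_ <;> rw [sum_sub_of_mem_Adn ha hav]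
  · exact Nat.dvd_sub hd dvd_rfl
  · have : (m + 5) * d = (m + 1 + 3) * d + d := by ring
    omega

end Degree

section Slide

variable {d n k : ℕ}

def slide (b : Fin (n + 1) → ℕ) (j : ℕ) : Fin (n + 1) → ℕ :=
  fun i => if i = 0 then b 0 - j else if i = 1 then b 1 + j else b i

lemma slide_zero (b : Fin (n + 1) → ℕ) : slide b 0 = b := by
  funext i
  unfold slide
  split_ifs <;> subst_vars <;> rfl

lemma slide_self (b : Fin (n + 1) → ℕ) :
    slide b (b 0) = fun i => if i = 0 then 0 else if i = 1 then b 0 + b 1 else b i := by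
  funext i
  simp only [slide, Nat.sub_self, add_comm]

lemma sum_slide {b : Fin (n + 1) → ℕ} {j : ℕ} (h01 : (0 : Fin (n + 1)) ≠ 1) (hj : j ≤ b 0) :
    ∑ i, slide b j i = ∑ i, b i := by
  have key : ∀ i, slide b j i + (if i = 0 then j else 0) = b i + (if i = 1 then j else 0) := by
    intro i
    unfold slide
    split_ifs <;> subst_vars <;> omega
  have := sum_congr rfl fun i (_ : i ∈ univ) => key i
  simp only [sum_add_distrib, sum_ite_eq', mem_univ, if_true] at this
  omega

lemma sub_ee_zero_slide_le (b : Fin (n + 1) → ℕ) (j : ℕ) :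
    slide b j - ee 0 ≤ slide b (j + 1) := by
  intro i
  simp only [slide, ee, Pi.sub_apply]
  split_ifs <;> omega

lemma ChainIn.chainInX {b : Fin (n + 1) → ℕ} {j : ℕ} {c : PChain n k}
    (h : ChainIn d n (slide b j) c) (hj : j ≤ b 0) : ChainInX d n b c :=
  fun σ hσ => ⟨j, hj, h σ hσ⟩

lemma exists_homologous_slide {b : Fin (n + 1) → ℕ}
    (hstep : ∀ j < b 0, RelAcyclic d n (k + 1) (slide b j)) :
    ∀ r j, j + r = b 0 → ∀ γ : PChain n (k + 1), ChainIn d n (slide b j) γ → bdry γ = 0 →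
      ∃ γ' : PChain n (k + 1), ChainIn d n (slide b (b 0)) γ' ∧ bdry γ' = 0 ∧
        ∃ η : PChain n (k + 2), ChainInX d n b η ∧ bdry η = γ - γ' := by
  intro r
  induction r with
  | zero =>
    rintro j rfl γ hγ hcyc
    exact ⟨γ, hγ, hcyc, 0, forall_mem_support_zero, by rw [bdry_zero, sub_self]⟩
  | succ r ih =>
    intro j hj γ hγ hcyc
    obtain ⟨θ, hθ, hlow⟩ := hstep j (by omega) γ hγ (Set.subset_univ _)
      (show FirstSumLt _ (bdry γ) by rw [hcyc]; exact forall_mem_support_zero)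
    obtain ⟨γ', hγ', hcyc', η, hη, hηγ⟩ := ih (j + 1) (by omega) (γ - bdry θ)
      ((ChainIn.sub_ee_zero_of_firstSumLt (forall_mem_support_sub hγ (chainIn_bdry hθ))
        hlow).mono (sub_ee_zero_slide_le b j))
      (by rw [bdry_sub, hcyc, bdry_bdry, sub_zero])
    exact ⟨γ', hγ', hcyc', θ + η, forall_mem_support_add (hθ.chainInX (by omega)) hη,
      by rw [bdry_add, hηγ]; abel⟩

end Slide

theorem stmt16_general (d n m : ℕ) (b : Fin (n + 1) → ℕ)
    (hb : b ∈ AddSubmonoid.closure (Adn d n))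
    (hdeg : (m + 5) * d ≤ ∑ i, b i)
    (γ : PChain n (m + 2)) (hγ : ChainIn d n b γ) (hcyc : bdry γ = 0)
    (hN : ∀ q, 1 ≤ q → q ≤ m + 2 → ∀ β ∈ AddSubmonoid.closure (Adn d n),
      (q + 2) * d ≤ ∑ i, β i → Hvanish d n (q - 1) β) :
    ∃ γ' : PChain n (m + 2),
      ChainIn d n (fun i => if i = 0 then 0 else if i = 1 then b 0 + b 1 else b i) γ' ∧
        bdry γ' = 0 ∧
        ∃ η : PChain n (m + 3), ChainInX d n b η ∧ bdry η = γ - γ' := by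
  have hd : d ∣ ∑ i, b i := mem_closure_Adn_iff.1 hb
  cases n with
  | zero =>
    have hstar : ∀ σ ∈ γ.support, (fun _ => d) ∈ univ.image σ := fun σ hσ =>
      mem_image.2 ⟨0, mem_univ _,
        eq_const_of_mem_Adn_zero ((hγ σ hσ).1 (mem_image_of_mem σ (mem_univ 0)))⟩
    refine ⟨0, forall_mem_support_zero, bdry_zero, vjoin (fun _ => d) γ,
      ChainIn.chainInX (j := 0) ((slide_zero b).symm ▸ hγ.vjoin_of_mem hstar) (Nat.zero_le _), ?_⟩
    rw [bdry_vjoin, hcyc, vjoin_eq_mapDomain, Finsupp.mapDomain_zero, sub_zero]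
  | succ n =>
    obtain ⟨γ', hγ', hcyc', η, hη, hηγ⟩ := exists_homologous_slide
      (fun j hj => relAcyclic_of_propertyN hN (by simp only [slide, if_true]; omega)
        (by rwa [sum_slide zero_ne_one hj.le]) (by rwa [sum_slide zero_ne_one hj.le]))
      (b 0) 0 (zero_add _) γ (by rwa [slide_zero]) hcyc
    rw [slide_self] at hγ'
    exact ⟨γ', hγ', hcyc', η, hη, hηγ⟩

/-- Proposition 9, "step 1", of the paper; here `p = m + 3`.
Let `b ∈ ℕA_{d,n}` with `deg b ≥ p+2` and let `γ` be a `(p−1)`-cycle in `Δ_b`.  Assume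
(a) `H_{p−3}(Δ_{c−e₁}) = 0` for all `c ∈ ℕA_{d,n}` with `deg c ≥ p+1`, and
(b) `H_{q−1}(Δ_β) = 0` for all `β ∈ ℕA_{d,n}` with `deg β ≥ q+2` and all `1 ≤ q ≤ p−1`
(i.e. `O_{ℙⁿ}(d)` satisfies `N_{p−1}`).
Then there is a `(p−1)`-cycle `γ'` in `Δ_{(0, b₁+b₂, b₃, …)}` homologous to `γ` in
`X_b = ⋃_{j=0}^{b₁} Δ_{b−je₁+je₂}`. -/
theorem stmt16 (d n m : ℕ) (b : Fin (n + 1) → ℕ)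
    (hb : b ∈ AddSubmonoid.closure (Adn d n))
    (hdeg : (m + 5) * d ≤ ∑ i, b i)
    (γ : PChain n (m + 2)) (hγ : ChainIn d n b γ) (hcyc : bdry γ = 0)
    (ha : ∀ c ∈ AddSubmonoid.closure (Adn d n),
      (m + 4) * d ≤ ∑ i, c i → Hvanish d n m (c - ee 0))
    (hN : ∀ q, 1 ≤ q → q ≤ m + 2 → ∀ β ∈ AddSubmonoid.closure (Adn d n),
      (q + 2) * d ≤ ∑ i, β i → Hvanish d n (q - 1) β) :
    ∃ γ' : PChain n (m + 2),
      ChainIn d n (fun i => if i = 0 then 0 else if i = 1 then b 0 + b 1 else b i) γ' ∧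
        bdry γ' = 0 ∧
        ∃ η : PChain n (m + 3), ChainInX d n b η ∧ bdry η = γ - γ' :=
  stmt16_general d n m b hb hdeg γ hγ hcyc hN
end
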